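/- Let L be the linear functional on polynomials whose nth moment mu_n is the number of noncrossing set partitions of [n] with all blocks of size t+1 (so mu_{(t+1)m} is the Fuss-Catalan number and mu_n = 0 otherwise). Then for all nonnegative integers n and m with m > nt, L(U^{(t)}_m(x) U^{(t)}_n(x)) = 0, and L(U^{(t)}_{nt}(x) U^{(t)}_n(x)) = 1. Hence the polynomials U^{(t)}_n are t-orthogonal with respect to L. -/

import Mathlib

open Polynomial

def IsNCPart (t n : ℕ) (P : Finset (Finset ℕ)) : Prop :=
  (∀ B ∈ P, B ⊆ Finset.range n) ∧
  (∀ i < n, ∃! B, B ∈ P ∧ i ∈ B) ∧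
  (∀ B ∈ P, B.card = t + 1) ∧
  ¬ ∃ a b c d : ℕ, a < b ∧ b < c ∧ c < d ∧
      ∃ B ∈ P, ∃ B' ∈ P, B ≠ B' ∧ a ∈ B ∧ c ∈ B ∧ b ∈ B' ∧ d ∈ B'

noncomputable def ncMoment (t n : ℕ) : ℚ :=
  ({P : Finset (Finset ℕ) | IsNCPart t n P}.ncard : ℚ)

noncomputable def Lfun (t : ℕ) (p : Polynomial ℚ) : ℚ :=
  ∑ i ∈ p.support, p.coeff i * ncMoment t i

/-- number of nonneg lattice paths, steps +t / -1, length n, from 0 to k. -/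
def Nt (t : ℕ) : ℕ → ℕ → ℕ
  | 0, k => if k = 0 then 1 else 0
  | n+1, k => Nt t n (k+1) + (if t ≤ k then Nt t n (k - t) else 0)

lemma Nt_high (t : ℕ) (ht : 1 ≤ t) : ∀ n m, n * t ≤ m →
    Nt t n m = if m = n * t then 1 else 0 := by
  intro n
  induction n with
  | zero => intro m hm; simp [Nt]
  | succ n ih =>
    intro m hm
    rw [Nat.succ_mul] at hm
    have h1 : t ≤ m := le_trans (Nat.le_add_left _ _) hm
    have h2 : n * t ≤ m + 1 := by omega
    have h3 : n * t ≤ m - t := by omega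
    rw [Nt, ih _ h2, ih _ h3, if_pos h1]
    have hne : ¬ (m + 1 = n * t) := by omega
    rw [if_neg hne]
    have : (m - t = n * t) ↔ (m = (n+1) * t) := by rw [Nat.succ_mul]; omega
    simp [this]

open Finset
def valSet (t n k : ℕ) : Finset (Finset ℕ) :=
  (Finset.range n).powerset.filter
    (fun S => (∀ j ≤ n, j ≤ (t+1) * (S ∩ Finset.range j).card) ∧ (t+1) * S.card = n + k)

lemma erase_inter_range {S : Finset ℕ} {n j : ℕ} (h : j ≤ n) :
    (S.erase n) ∩ Finset.range j = S ∩ Finset.range j := by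
  ext x
  simp only [Finset.mem_inter, Finset.mem_erase, Finset.mem_range]
  constructor
  · rintro ⟨⟨_, h2⟩, h3⟩; exact ⟨h2, h3⟩
  · rintro ⟨h2, h3⟩; exact ⟨⟨by omega, h2⟩, h3⟩

lemma insert_inter_range {S : Finset ℕ} {n j : ℕ} (h : j ≤ n) :
    (insert n S) ∩ Finset.range j = S ∩ Finset.range j := by
  ext x
  simp only [Finset.mem_inter, Finset.mem_insert, Finset.mem_range]
  constructor
  · rintro ⟨rfl | h2, h3⟩
    · omega
    · exact ⟨h2, h3⟩
  · rintro ⟨h2, h3⟩; exact ⟨Or.inr h2, h3⟩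

lemma mul_sub_one' (a b : ℕ) (hb : 1 ≤ b) : a * (b - 1) + a = a * b := by
  have : a * (b - 1) + a * 1 = a * ((b-1) + 1) := by rw [Nat.mul_add]
  simp only [Nat.mul_one] at this
  rw [this]
  congr 1
  omega

lemma valSet_card (t : ℕ) : ∀ n k, (valSet t n k).card = Nt t n k := by
  intro n
  induction n with
  | zero =>
    intro k
    by_cases hk : k = 0
    · subst hk
      have : valSet t 0 0 = {∅} := by
        ext S
        simp only [valSet, Finset.range_zero, Finset.powerset_empty, Finset.mem_filter,
          Finset.mem_singleton]
        constructor
        · exact fun h => h.1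
        · rintro rfl
          exact ⟨rfl, fun j hj => by omega, by simp⟩
      rw [this]
      simp [Nt]
    · have : valSet t 0 k = ∅ := by
        rw [Finset.eq_empty_iff_forall_notMem]
        intro S hS
        simp only [valSet, Finset.range_zero, Finset.powerset_empty, Finset.mem_filter,
          Finset.mem_singleton] at hS
        obtain ⟨rfl, _, h3⟩ := hS
        simp at h3
        omega
      rw [this]
      simp [Nt, hk]
  | succ n ih =>
    intro k
    classical
    have hsplit : ((valSet t (n+1) k).filter (fun S => n ∈ S)).card
        + ((valSet t (n+1) k).filter (fun S => n ∉ S)).card = (valSet t (n+1) k).card :=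
      Finset.card_filter_add_card_filter_not _
    have hout : (valSet t (n+1) k).filter (fun S => n ∉ S) = valSet t n (k+1) := by
      ext S
      simp only [valSet, Finset.mem_filter, Finset.mem_powerset]
      constructor
      · rintro ⟨⟨h1, h2, h3⟩, h4⟩
        have hsub : S ⊆ Finset.range n := by
          intro x hx
          have := h1 hx
          simp only [Finset.mem_range] at this ⊢
          rcases Nat.lt_succ_iff_lt_or_eq.mp this with h | rfl
          · exact h
          · exact absurd hx h4
        exact ⟨hsub, fun j hj => h2 j (by omega), by omega⟩
      · rintro ⟨h1, h2, h3⟩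
        have hsub : S ⊆ Finset.range (n+1) := h1.trans (by intro x; simp; omega)
        refine ⟨⟨hsub, ?_, by omega⟩, fun hn => by simpa using h1 hn⟩
        intro j hj
        rcases Nat.lt_succ_iff_lt_or_eq.mp (Nat.lt_succ_of_le hj) with h | rfl
        · exact h2 j (by omega)
        · rw [Finset.inter_eq_left.mpr hsub]
          omega
    have hin : ((valSet t (n+1) k).filter (fun S => n ∈ S)).card
        = if t ≤ k then Nt t n (k - t) else 0 := by
      by_cases hk : t ≤ k
      · rw [if_pos hk, ← ih (k - t)]
        refine Finset.card_bij' (fun S _ => S.erase n) (fun S _ => insert n S) ?hi ?hj ?left ?right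
        case hi =>
          intro S hS
          simp only [Finset.mem_filter] at hS
          obtain ⟨hS, hnS⟩ := hS
          simp only [valSet, Finset.mem_filter, Finset.mem_powerset] at hS ⊢
          obtain ⟨h1, h2, h3⟩ := hS
          have hcard : 1 ≤ S.card := Finset.card_pos.mpr ⟨n, hnS⟩
          have hce : (S.erase n).card = S.card - 1 := Finset.card_erase_of_mem hnS
          have hmul := mul_sub_one' (t+1) S.card hcard
          refine ⟨?_, ?_, ?_⟩
          · intro x hx
            simp only [Finset.mem_erase] at hx
            have := h1 hx.2
            simp only [Finset.mem_range] at this ⊢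
            omega
          · intro j hj
            rw [erase_inter_range (show j ≤ n by omega)]
            exact h2 j (by omega)
          · rw [hce]
            omega
        case hj =>
          intro S hS
          simp only [valSet, Finset.mem_filter, Finset.mem_powerset] at hS
          obtain ⟨h1, h2, h3⟩ := hS
          have hnS : n ∉ S := fun h => by simpa using h1 h
          have hci : (insert n S).card = S.card + 1 := Finset.card_insert_of_notMem hnS
          have hsub : insert n S ⊆ Finset.range (n+1) := by
            intro x hx
            rcases Finset.mem_insert.mp hx with rfl | hx
            · simp
            · have := h1 hx; simp only [Finset.mem_range] at this ⊢; omega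
          simp only [Finset.mem_filter]
          refine ⟨?_, Finset.mem_insert_self n S⟩
          simp only [valSet, Finset.mem_filter, Finset.mem_powerset]
          have hmul : (t+1) * (insert n S).card = (t+1) * S.card + (t+1) := by
            rw [hci]; ring
          refine ⟨hsub, ?_, by omega⟩
          intro j hj
          rcases Nat.lt_succ_iff_lt_or_eq.mp (Nat.lt_succ_of_le hj) with h | rfl
          · rw [insert_inter_range (show j ≤ n by omega)]
            exact h2 j (by omega)
          · rw [Finset.inter_eq_left.mpr hsub]
            omega
        case left =>
          intro S hS
          simp only [Finset.mem_filter] at hS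
          exact Finset.insert_erase hS.2
        case right =>
          intro S hS
          simp only [valSet, Finset.mem_filter, Finset.mem_powerset] at hS
          have hnS : n ∉ S := fun h => by simpa using hS.1 h
          exact Finset.erase_insert hnS
      · rw [if_neg hk, Finset.card_eq_zero, Finset.eq_empty_iff_forall_notMem]
        intro S hS
        simp only [Finset.mem_filter] at hS
        obtain ⟨hS, hnS⟩ := hS
        simp only [valSet, Finset.mem_filter, Finset.mem_powerset] at hS
        obtain ⟨h1, h2, h3⟩ := hS
        have hcond := h2 n (by omega)
        have hir : S ∩ Finset.range n = S.erase n := by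
          ext x
          simp only [Finset.mem_inter, Finset.mem_range, Finset.mem_erase]
          constructor
          · rintro ⟨hx, hlt⟩; exact ⟨by omega, hx⟩
          · rintro ⟨hne, hx⟩
            have := h1 hx
            simp only [Finset.mem_range] at this
            exact ⟨hx, by omega⟩
        rw [hir, Finset.card_erase_of_mem hnS] at hcond
        have hcard : 1 ≤ S.card := Finset.card_pos.mpr ⟨n, hnS⟩
        have hmul := mul_sub_one' (t+1) S.card hcard
        omega
    rw [show Nt t (n+1) k = Nt t n (k+1) + (if t ≤ k then Nt t n (k - t) else 0) from rfl]
    rw [← hsplit, hout, ih (k+1), hin]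
    ring

noncomputable def mn (B : Finset ℕ) : ℕ := if h : B.Nonempty then B.min' h else 0

noncomputable def opS (P : Finset (Finset ℕ)) : Finset ℕ := P.image mn

lemma mn_mem {B : Finset ℕ} (h : B.Nonempty) : mn B ∈ B := by
  rw [mn, dif_pos h]
  exact Finset.min'_mem _ h

lemma mn_le {B : Finset ℕ} {x : ℕ} (hx : x ∈ B) : mn B ≤ x := by
  have h : B.Nonempty := ⟨x, hx⟩
  rw [mn, dif_pos h]
  exact Finset.min'_le _ _ hx

lemma mn_Icc {a b : ℕ} (h : a ≤ b) : mn (Finset.Icc a b) = a := by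
  have ha : a ∈ Finset.Icc a b := by simp [h]
  refine le_antisymm (mn_le ha) ?_
  have := mn_mem ⟨a, ha⟩
  simp only [Finset.mem_Icc] at this
  exact this.1

section Basics
variable {t n : ℕ} {P : Finset (Finset ℕ)}

lemma block_nonempty (hP : IsNCPart t n P) {B : Finset ℕ} (hB : B ∈ P) : B.Nonempty := by
  rw [← Finset.card_pos, hP.2.2.1 B hB]; omega

lemma block_eq_of_mem (hP : IsNCPart t n P) {B B' : Finset ℕ} (hB : B ∈ P) (hB' : B' ∈ P)
    {x : ℕ} (hx : x ∈ B) (hx' : x ∈ B') : B = B' := by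
  have hxn : x < n := by
    have := hP.1 B hB hx; simpa using this
  obtain ⟨C, _, hC⟩ := hP.2.1 x hxn
  rw [hC B ⟨hB, hx⟩, hC B' ⟨hB', hx'⟩]

lemma mn_injOn (hP : IsNCPart t n P) {B B' : Finset ℕ} (hB : B ∈ P) (hB' : B' ∈ P)
    (h : mn B = mn B') : B = B' :=
  block_eq_of_mem hP hB hB' (mn_mem (block_nonempty hP hB))
    (h ▸ mn_mem (block_nonempty hP hB'))

lemma biUnion_eq (hP : IsNCPart t n P) : P.biUnion id = Finset.range n := by
  apply Finset.Subset.antisymm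
  · intro x hx
    simp only [Finset.mem_biUnion, id] at hx
    obtain ⟨B, hB, hx⟩ := hx
    exact hP.1 B hB hx
  · intro x hx
    simp only [Finset.mem_range] at hx
    obtain ⟨B, ⟨hB, hxB⟩, _⟩ := hP.2.1 x hx
    simp only [Finset.mem_biUnion, id]
    exact ⟨B, hB, hxB⟩

lemma card_part (hP : IsNCPart t n P) : (t+1) * P.card = n := by
  have h1 : (P.biUnion id).card = ∑ B ∈ P, B.card := by
    apply Finset.card_biUnion
    intro B hB B' hB' hne
    rw [Function.onFun, Finset.disjoint_left]
    intro x hx hx'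
    exact hne (block_eq_of_mem hP hB hB' hx hx')
  rw [biUnion_eq hP, Finset.card_range] at h1
  rw [h1]
  rw [Finset.sum_congr rfl (fun B hB => hP.2.2.1 B hB), Finset.sum_const, smul_eq_mul]
  ring

lemma opS_mem_valSet (hP : IsNCPart t n P) : opS P ∈ valSet t n 0 := by
  classical
  have hinj : ∀ B ∈ P, ∀ B' ∈ P, mn B = mn B' → B = B' :=
    fun B hB B' hB' h => mn_injOn hP hB hB' h
  have hcard : (opS P).card = P.card :=
    Finset.card_image_of_injOn (fun B hB B' hB' h => hinj B hB B' hB' h)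
  simp only [valSet, Finset.mem_filter, Finset.mem_powerset]
  refine ⟨?_, ?_, ?_⟩
  · intro x hx
    simp only [opS, Finset.mem_image] at hx
    obtain ⟨B, hB, rfl⟩ := hx
    exact hP.1 B hB (mn_mem (block_nonempty hP hB))
  · intro j hj
    set Pj := P.filter (fun B => mn B < j) with hPj
    have hsub : Finset.range j ⊆ Pj.biUnion id := by
      intro i hi
      simp only [Finset.mem_range] at hi
      obtain ⟨B, ⟨hB, hiB⟩, _⟩ := hP.2.1 i (by omega)
      simp only [Finset.mem_biUnion, id, hPj, Finset.mem_filter]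
      exact ⟨B, ⟨hB, lt_of_le_of_lt (mn_le hiB) hi⟩, hiB⟩
    have h1 : j ≤ (Pj.biUnion id).card := by
      have := Finset.card_le_card hsub
      simpa using this
    have h2 : (Pj.biUnion id).card = ∑ B ∈ Pj, B.card := by
      apply Finset.card_biUnion
      intro B hB B' hB' hne
      rw [Function.onFun, Finset.disjoint_left]
      intro x hx hx'
      exact hne (block_eq_of_mem hP (Finset.mem_of_mem_filter _ hB)
        (Finset.mem_of_mem_filter _ hB') hx hx')
    have h3 : ∑ B ∈ Pj, B.card = (t+1) * Pj.card := by
      rw [Finset.sum_congr rfl (fun B hB => hP.2.2.1 B (Finset.mem_of_mem_filter _ hB)),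
        Finset.sum_const, smul_eq_mul]
      ring
    have h4 : opS P ∩ Finset.range j = Pj.image mn := by
      ext x
      simp only [opS, Finset.mem_inter, Finset.mem_image, Finset.mem_range, hPj,
        Finset.mem_filter]
      constructor
      · rintro ⟨⟨B, hB, rfl⟩, hlt⟩
        exact ⟨B, ⟨hB, hlt⟩, rfl⟩
      · rintro ⟨B, ⟨hB, hlt⟩, rfl⟩
        exact ⟨⟨B, hB, rfl⟩, hlt⟩
    have h5 : (Pj.image mn).card = Pj.card :=
      Finset.card_image_of_injOn (fun B hB B' hB' h =>
        hinj B (Finset.mem_of_mem_filter _ hB) B' (Finset.mem_of_mem_filter _ hB') h)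
    rw [h4, h5]
    omega
  · rw [hcard, card_part hP]
    ring

lemma max_block_interval (hP : IsNCPart t n P) {B : Finset ℕ} (hB : B ∈ P)
    (hmax : ∀ B' ∈ P, mn B' ≤ mn B) : B = Finset.Icc (mn B) (mn B + t) := by
  set j := mn B with hj
  have hBne : B.Nonempty := block_nonempty hP hB
  have claim : ∀ y z, z ∈ B → j < y → y < z → y ∈ B := by
    intro y z hz hy1 hy2
    by_contra hy
    have hyn : y < n := by
      have hz2 := hP.1 B hB hz
      simp only [Finset.mem_range] at hz2
      omega
    obtain ⟨B', ⟨hB', hyB'⟩, _⟩ := hP.2.1 y hyn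
    have hne : B' ≠ B := fun h => hy (h ▸ hyB')
    have haj : mn B' < j := by
      rcases lt_or_eq_of_le (hmax B' hB') with h | h
      · exact h
      · exact absurd (mn_injOn hP hB' hB h) hne
    have hay : mn B' ≤ y := mn_le hyB'
    exact hP.2.2.2 ⟨mn B', j, y, z, haj, hy1, hy2, B', hB', B, hB, hne,
      mn_mem (block_nonempty hP hB'), hyB', mn_mem hBne, hz⟩
  set M := B.max' hBne with hM
  have hMB : M ∈ B := Finset.max'_mem _ _
  have hBIcc : B ⊆ Finset.Icc j M := by
    intro x hx
    simp only [Finset.mem_Icc]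
    exact ⟨mn_le hx, Finset.le_max' _ _ hx⟩
  have hIccB : Finset.Icc j M ⊆ B := by
    intro x hx
    simp only [Finset.mem_Icc] at hx
    rcases eq_or_lt_of_le hx.1 with rfl | h1
    · exact mn_mem hBne
    rcases eq_or_lt_of_le hx.2 with rfl | h2
    · exact hMB
    exact claim x M hMB h1 h2
  have hBeq : B = Finset.Icc j M := Finset.Subset.antisymm hBIcc hIccB
  have hcard := hP.2.2.1 B hB
  rw [hBeq, Nat.card_Icc] at hcard
  have hjM : j ≤ M := mn_le hMB
  have hMeq : M = j + t := by omega
  rw [hBeq, hMeq]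
end Basics

section Transfer
variable (t j : ℕ)

def eup (x : ℕ) : ℕ := if x < j then x else x + (t+1)
def edn (x : ℕ) : ℕ := if x < j then x else x - (t+1)

variable {t j}

lemma eup_lt {x y : ℕ} (h : x < y) : eup t j x < eup t j y := by
  simp only [eup]; split_ifs <;> omega

lemma eup_le {x y : ℕ} (h : x ≤ y) : eup t j x ≤ eup t j y := by
  simp only [eup]; split_ifs <;> omega

lemma eup_lt_iff {x y : ℕ} : eup t j x < eup t j y ↔ x < y := by
  simp only [eup]; split_ifs <;> omega

lemma eup_inj {x y : ℕ} (h : eup t j x = eup t j y) : x = y := by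
  simp only [eup] at h; split_ifs at h <;> omega

lemma eup_avoid (x : ℕ) : eup t j x < j ∨ j + t < eup t j x := by
  simp only [eup]; split_ifs <;> omega

lemma edn_eup (x : ℕ) : edn t j (eup t j x) = x := by
  simp only [eup, edn]; split_ifs <;> omega

lemma eup_edn {x : ℕ} (h : x < j ∨ j + t < x) : eup t j (edn t j x) = x := by
  simp only [eup, edn]; split_ifs <;> omega

lemma edn_le {x y : ℕ} (hx : x < j ∨ j + t < x) (hy : y < j ∨ j + t < y) (h : x ≤ y) :
    edn t j x ≤ edn t j y := by
  simp only [edn]; split_ifs <;> omega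

lemma mn_image_eup {B : Finset ℕ} (h : B.Nonempty) :
    mn (B.image (eup t j)) = eup t j (mn B) := by
  have h1 : eup t j (mn B) ∈ B.image (eup t j) := Finset.mem_image_of_mem _ (mn_mem h)
  refine le_antisymm (mn_le h1) ?_
  have h2 : mn (B.image (eup t j)) ∈ B.image (eup t j) := mn_mem ⟨_, h1⟩
  simp only [Finset.mem_image] at h2
  obtain ⟨b, hb, hbe⟩ := h2
  rw [← hbe]
  exact eup_le (mn_le hb)

lemma mn_image_edn {B : Finset ℕ} (h : B.Nonempty) (hav : ∀ x ∈ B, x < j ∨ j + t < x) :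
    mn (B.image (edn t j)) = edn t j (mn B) := by
  have h1 : edn t j (mn B) ∈ B.image (edn t j) := Finset.mem_image_of_mem _ (mn_mem h)
  refine le_antisymm (mn_le h1) ?_
  have h2 : mn (B.image (edn t j)) ∈ B.image (edn t j) := mn_mem ⟨_, h1⟩
  simp only [Finset.mem_image] at h2
  obtain ⟨b, hb, hbe⟩ := h2
  rw [← hbe]
  exact edn_le (hav _ (mn_mem h)) (hav _ hb) (mn_le hb)

lemma NC_up {t n j : ℕ} (hj : j + (t+1) ≤ n) {P' : Finset (Finset ℕ)}
    (hP' : IsNCPart t (n - (t+1)) P') :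
    IsNCPart t n (insert (Finset.Icc j (j+t)) (P'.image (fun B => B.image (eup t j)))) := by
  set n' := n - (t+1) with hn'
  have hnn : n' + (t+1) = n := by omega
  set B0 := Finset.Icc j (j+t) with hB0
  refine ⟨?_, ?_, ?_, ?_⟩
  · intro B hB
    rcases Finset.mem_insert.mp hB with rfl | hB
    · intro x hx
      simp only [hB0, Finset.mem_Icc] at hx
      simp only [Finset.mem_range]
      omega
    · simp only [Finset.mem_image] at hB
      obtain ⟨C, hC, rfl⟩ := hB
      intro x hx
      simp only [Finset.mem_image] at hx
      obtain ⟨y, hy, rfl⟩ := hx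
      have := hP'.1 C hC hy
      simp only [Finset.mem_range] at this ⊢
      simp only [eup]
      split_ifs <;> omega
  · intro i hi
    by_cases hiB0 : j ≤ i ∧ i ≤ j + t
    · refine ⟨B0, ⟨Finset.mem_insert_self _ _, by simp [hB0, Finset.mem_Icc]; omega⟩, ?_⟩
      rintro B ⟨hB, hiB⟩
      rcases Finset.mem_insert.mp hB with rfl | hB
      · rfl
      · exfalso
        simp only [Finset.mem_image] at hB
        obtain ⟨C, hC, rfl⟩ := hB
        simp only [Finset.mem_image] at hiB
        obtain ⟨y, hy, hye⟩ := hiB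
        rcases eup_avoid (t := t) (j := j) y with h | h <;> omega
    · push_neg at hiB0
      have havi : i < j ∨ j + t < i := by omega
      have hy : edn t j i < n' := by
        simp only [edn]
        split_ifs <;> omega
      obtain ⟨C, ⟨hC, hyC⟩, huC⟩ := hP'.2.1 (edn t j i) hy
      refine ⟨C.image (eup t j), ⟨Finset.mem_insert_of_mem (Finset.mem_image_of_mem _ hC), ?_⟩, ?_⟩
      · rw [← eup_edn havi]
        exact Finset.mem_image_of_mem _ hyC
      · rintro B ⟨hB, hiB⟩
        rcases Finset.mem_insert.mp hB with rfl | hB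
        · exfalso
          simp only [hB0, Finset.mem_Icc] at hiB
          omega
        · simp only [Finset.mem_image] at hB
          obtain ⟨D, hD, rfl⟩ := hB
          simp only [Finset.mem_image] at hiB
          obtain ⟨z, hz, hze⟩ := hiB
          have : z = edn t j i := by rw [← hze, edn_eup]
          subst this
          rw [huC D ⟨hD, hz⟩]
  · intro B hB
    rcases Finset.mem_insert.mp hB with rfl | hB
    · simp only [hB0, Nat.card_Icc]
      omega
    · simp only [Finset.mem_image] at hB
      obtain ⟨C, hC, rfl⟩ := hB
      rw [Finset.card_image_of_injective _ (fun x y => eup_inj), hP'.2.2.1 C hC]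
  · rintro ⟨a, b, c, d, hab, hbc, hcd, B, hB, B', hB', hne, haB, hcB, hbB', hdB'⟩
    rcases Finset.mem_insert.mp hB with rfl | hB <;>
      rcases Finset.mem_insert.mp hB' with rfl | hB'
    · exact hne rfl
    · -- B = B0, B' image : a,c ∈ Icc, b between, b in image: contra
      simp only [Finset.mem_image] at hB'
      obtain ⟨C', hC', rfl⟩ := hB'
      simp only [hB0, Finset.mem_Icc] at haB hcB
      simp only [Finset.mem_image] at hbB'
      obtain ⟨y, hy, hye⟩ := hbB'
      rcases eup_avoid (t := t) (j := j) y with h | h <;> omega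
    · simp only [Finset.mem_image] at hB
      obtain ⟨C, hC, rfl⟩ := hB
      simp only [hB0, Finset.mem_Icc] at hbB' hdB'
      simp only [Finset.mem_image] at hcB
      obtain ⟨y, hy, hye⟩ := hcB
      rcases eup_avoid (t := t) (j := j) y with h | h <;> omega
    · simp only [Finset.mem_image] at hB hB'
      obtain ⟨C, hC, rfl⟩ := hB
      obtain ⟨C', hC', rfl⟩ := hB'
      simp only [Finset.mem_image] at haB hcB hbB' hdB'
      obtain ⟨a0, ha0, rfl⟩ := haB
      obtain ⟨c0, hc0, rfl⟩ := hcB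
      obtain ⟨b0, hb0, rfl⟩ := hbB'
      obtain ⟨d0, hd0, rfl⟩ := hdB'
      have hCC : C ≠ C' := fun h => hne (by rw [h])
      exact hP'.2.2.2 ⟨a0, b0, c0, d0, eup_lt_iff.mp hab, eup_lt_iff.mp hbc,
        eup_lt_iff.mp hcd, C, hC, C', hC', hCC, ha0, hc0, hb0, hd0⟩

lemma opS_up {t n j : ℕ} {P' : Finset (Finset ℕ)}
    (hP' : IsNCPart t (n - (t+1)) P') (hop : ∀ B ∈ P', mn B < j) :
    opS (insert (Finset.Icc j (j+t)) (P'.image (fun B => B.image (eup t j))))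
      = insert j (opS P') := by
  rw [opS, Finset.image_insert, mn_Icc (by omega), Finset.image_image]
  congr 1
  rw [opS]
  apply Finset.image_congr
  intro B hB
  simp only [Function.comp]
  rw [mn_image_eup (block_nonempty hP' hB)]
  simp only [eup]
  rw [if_pos (hop B hB)]

lemma block_avoid {t n j : ℕ} {Q : Finset (Finset ℕ)} (hQ : IsNCPart t n Q)
    (hB0 : Finset.Icc j (j+t) ∈ Q) {B : Finset ℕ} (hB : B ∈ Q)
    (hne : B ≠ Finset.Icc j (j+t)) : ∀ x ∈ B, x < j ∨ j + t < x := by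
  intro x hx
  by_contra h
  push_neg at h
  have hxI : x ∈ Finset.Icc j (j+t) := by simp only [Finset.mem_Icc]; omega
  exact hne (block_eq_of_mem hQ hB hB0 hx hxI)

lemma NC_down {t n j : ℕ} {Q : Finset (Finset ℕ)} (hQ : IsNCPart t n Q)
    (hB0 : Finset.Icc j (j+t) ∈ Q) :
    IsNCPart t (n - (t+1)) ((Q.erase (Finset.Icc j (j+t))).image (fun B => B.image (edn t j))) := by
  set B0 := Finset.Icc j (j+t) with hB0def
  have hjn : j + t < n := by
    have := hQ.1 B0 hB0 (show j + t ∈ B0 by simp [hB0def, Finset.mem_Icc])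
    simpa using this
  set n' := n - (t+1) with hn'
  have hnn : n' + (t+1) = n := by omega
  have havoid : ∀ B ∈ Q.erase B0, ∀ x ∈ B, x < j ∨ j + t < x := by
    intro B hBe
    exact block_avoid hQ hB0 (Finset.mem_of_mem_erase hBe) (Finset.ne_of_mem_erase hBe)
  refine ⟨?_, ?_, ?_, ?_⟩
  · intro B hB
    simp only [Finset.mem_image] at hB
    obtain ⟨C, hC, rfl⟩ := hB
    intro x hx
    simp only [Finset.mem_image] at hx
    obtain ⟨y, hy, rfl⟩ := hx
    have h1 := havoid C hC y hy
    have h2 := hQ.1 C (Finset.mem_of_mem_erase hC) hy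
    simp only [Finset.mem_range] at h2 ⊢
    simp only [edn]
    split_ifs <;> omega
  · intro i hi
    have hyn : eup t j i < n := by
      simp only [eup]; split_ifs <;> omega
    have hyav := eup_avoid (t := t) (j := j) i
    obtain ⟨C, ⟨hC, hyC⟩, huC⟩ := hQ.2.1 (eup t j i) hyn
    have hCne : C ≠ B0 := by
      intro h
      subst h
      simp only [hB0def, Finset.mem_Icc] at hyC
      omega
    have hCe : C ∈ Q.erase B0 := Finset.mem_erase.mpr ⟨hCne, hC⟩
    refine ⟨C.image (edn t j), ⟨Finset.mem_image_of_mem _ hCe, ?_⟩, ?_⟩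
    · rw [← edn_eup (t := t) (j := j) i]
      exact Finset.mem_image_of_mem _ hyC
    · rintro B ⟨hB, hiB⟩
      simp only [Finset.mem_image] at hB
      obtain ⟨D, hD, rfl⟩ := hB
      simp only [Finset.mem_image] at hiB
      obtain ⟨z, hz, hze⟩ := hiB
      have hzav := havoid D hD z hz
      have hzi : z = eup t j i := by rw [← hze, eup_edn hzav]
      subst hzi
      rw [huC D ⟨Finset.mem_of_mem_erase hD, hz⟩]
  · intro B hB
    simp only [Finset.mem_image] at hB
    obtain ⟨C, hC, rfl⟩ := hB
    rw [Finset.card_image_of_injOn, hQ.2.2.1 C (Finset.mem_of_mem_erase hC)]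
    intro x hx y hy hxy
    have h1 := havoid C hC x hx
    have h2 := havoid C hC y hy
    simp only [edn] at hxy
    split_ifs at hxy <;> omega
  · rintro ⟨a, b, c, d, hab, hbc, hcd, B, hB, B', hB', hne, haB, hcB, hbB', hdB'⟩
    simp only [Finset.mem_image] at hB hB'
    obtain ⟨C, hC, rfl⟩ := hB
    obtain ⟨C', hC', rfl⟩ := hB'
    simp only [Finset.mem_image] at haB hcB hbB' hdB'
    obtain ⟨a0, ha0, rfl⟩ := haB
    obtain ⟨c0, hc0, rfl⟩ := hcB
    obtain ⟨b0, hb0, rfl⟩ := hbB'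
    obtain ⟨d0, hd0, rfl⟩ := hdB'
    have hCC : C ≠ C' := fun h => hne (by rw [h])
    have hlt : ∀ x y : ℕ, x ∈ C ∪ C' → y ∈ C ∪ C' → edn t j x < edn t j y → x < y := by
      intro x y hx hy hxy
      have h1 : x < j ∨ j + t < x := by
        rcases Finset.mem_union.mp hx with h | h
        · exact havoid C hC x h
        · exact havoid C' hC' x h
      have h2 : y < j ∨ j + t < y := by
        rcases Finset.mem_union.mp hy with h | h
        · exact havoid C hC y h
        · exact havoid C' hC' y h
      simp only [edn] at hxy
      split_ifs at hxy <;> omega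
    exact hQ.2.2.2 ⟨a0, b0, c0, d0,
      hlt a0 b0 (Finset.mem_union_left _ ha0) (Finset.mem_union_right _ hb0) hab,
      hlt b0 c0 (Finset.mem_union_right _ hb0) (Finset.mem_union_left _ hc0) hbc,
      hlt c0 d0 (Finset.mem_union_left _ hc0) (Finset.mem_union_right _ hd0) hcd,
      C, Finset.mem_of_mem_erase hC, C', Finset.mem_of_mem_erase hC', hCC,
      ha0, hc0, hb0, hd0⟩

lemma opS_down {t n j : ℕ} {Q : Finset (Finset ℕ)} (hQ : IsNCPart t n Q)
    (hB0 : Finset.Icc j (j+t) ∈ Q)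
    (hmn : ∀ B ∈ Q.erase (Finset.Icc j (j+t)), mn B < j) :
    opS ((Q.erase (Finset.Icc j (j+t))).image (fun B => B.image (edn t j)))
      = (opS Q).erase j := by
  set B0 := Finset.Icc j (j+t) with hB0def
  have havoid : ∀ B ∈ Q.erase B0, ∀ x ∈ B, x < j ∨ j + t < x := by
    intro B hBe
    exact block_avoid hQ hB0 (Finset.mem_of_mem_erase hBe) (Finset.ne_of_mem_erase hBe)
  have h1 : opS ((Q.erase B0).image (fun B => B.image (edn t j)))
      = (Q.erase B0).image mn := by
    rw [opS, Finset.image_image]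
    apply Finset.image_congr
    intro B hB
    simp only [Function.comp]
    rw [mn_image_edn (block_nonempty hQ (Finset.mem_of_mem_erase hB)) (havoid B hB)]
    simp only [edn]
    rw [if_pos (hmn B hB)]
  rw [h1]
  ext x
  simp only [opS, Finset.mem_image, Finset.mem_erase]
  constructor
  · rintro ⟨B, ⟨hBne, hBQ⟩, rfl⟩
    exact ⟨Nat.ne_of_lt (hmn B (Finset.mem_erase.mpr ⟨hBne, hBQ⟩)), B, hBQ, rfl⟩
  · rintro ⟨hxj, B, hBQ, rfl⟩
    refine ⟨B, ⟨?_, hBQ⟩, rfl⟩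
    intro h
    exact hxj (by rw [h, hB0def, mn_Icc (by omega)])

lemma reconstruct {t n j : ℕ} {Q : Finset (Finset ℕ)} (hQ : IsNCPart t n Q)
    (hB0 : Finset.Icc j (j+t) ∈ Q) :
    Q = insert (Finset.Icc j (j+t))
      (((Q.erase (Finset.Icc j (j+t))).image (fun B => B.image (edn t j))).image
        (fun B => B.image (eup t j))) := by
  set B0 := Finset.Icc j (j+t) with hB0def
  have havoid : ∀ B ∈ Q.erase B0, ∀ x ∈ B, x < j ∨ j + t < x := by
    intro B hBe
    exact block_avoid hQ hB0 (Finset.mem_of_mem_erase hBe) (Finset.ne_of_mem_erase hBe)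
  have h1 : ((Q.erase B0).image (fun B => B.image (edn t j))).image
      (fun B => B.image (eup t j)) = Q.erase B0 := by
    rw [Finset.image_image]
    have : ∀ B ∈ Q.erase B0, ((fun B => Finset.image (eup t j) B) ∘
        (fun B => Finset.image (edn t j) B)) B = id B := by
      intro B hB
      simp only [Function.comp, id, Finset.image_image]
      ext y
      simp only [Finset.mem_image, Function.comp]
      constructor
      · rintro ⟨z, hz, rfl⟩
        rw [eup_edn (havoid B hB z hz)]
        exact hz
      · intro hy
        exact ⟨y, hy, eup_edn (havoid B hB y hy)⟩
    rw [Finset.image_congr this, Finset.image_id]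
  rw [h1, Finset.insert_erase hB0]
end Transfer

lemma mul_sub_one_aux (a b : ℕ) (hb : 1 ≤ b) : a * (b - 1) + a = a * b := by
  have h : a * (b - 1) + a * 1 = a * ((b-1) + 1) := by rw [Nat.mul_add]
  simp only [Nat.mul_one] at h
  rw [h]
  congr 1
  omega

lemma key (t : ℕ) : ∀ n, ∀ S : Finset ℕ, S ∈ valSet t n 0 →
    ∃! P : Finset (Finset ℕ), IsNCPart t n P ∧ opS P = S := by
  intro n
  induction n using Nat.strong_induction_on with
  | _ n ih =>
    intro S hS
    simp only [valSet, Finset.mem_filter, Finset.mem_powerset] at hS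
    obtain ⟨hsub, hpre, htot⟩ := hS
    rcases Nat.eq_zero_or_pos n with rfl | hn
    · have hSempty : S = ∅ := by
        apply Finset.card_eq_zero.mp
        by_contra h
        have h1 : 1 ≤ S.card := by omega
        have h2 : (t+1) * 1 ≤ (t+1) * S.card := Nat.mul_le_mul_left _ h1
        omega
      subst hSempty
      refine ⟨∅, ⟨⟨by simp, by omega, by simp, ?_⟩, by simp [opS]⟩, ?_⟩
      · rintro ⟨a, b, c, d, _, _, _, B, hB, _⟩
        simp at hB
      · rintro Q ⟨hQ, hopQ⟩
        rw [Finset.eq_empty_iff_forall_notMem]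
        intro B hB
        have h2 := hQ.2.2.1 B hB
        have hBe : B = ∅ := by
          rw [Finset.eq_empty_iff_forall_notMem]
          intro x hx
          simpa using hQ.1 B hB hx
        rw [hBe] at h2
        simp at h2
    · have hScard : 1 ≤ S.card := by
        rcases Nat.eq_zero_or_pos S.card with h | h
        · rw [h] at htot; simp at htot; omega
        · exact h
      have hSne : S.Nonempty := Finset.card_pos.mp hScard
      set j := S.max' hSne with hjdef
      have hjS : j ∈ S := Finset.max'_mem _ _
      have hjmax : ∀ x ∈ S, x ≤ j := fun x hx => Finset.le_max' _ _ hx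
      have hSij : S ∩ Finset.range j = S.erase j := by
        ext x
        simp only [Finset.mem_inter, Finset.mem_range, Finset.mem_erase]
        constructor
        · rintro ⟨hx, hlt⟩; exact ⟨by omega, hx⟩
        · rintro ⟨hne, hx⟩; exact ⟨hx, lt_of_le_of_ne (hjmax x hx) hne⟩
      have hce : (S.erase j).card = S.card - 1 := Finset.card_erase_of_mem hjS
      have hmul := mul_sub_one_aux (t+1) S.card hScard
      have hjle : j + (t+1) ≤ n := by
        have h := hpre j (by have := hsub hjS; simp only [Finset.mem_range] at this; omega)
        rw [hSij, hce] at h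
        omega
      set n' := n - (t+1) with hn'def
      set S' := S.erase j with hS'def
      have hS'el : ∀ x ∈ S', x < j := by
        intro x hx
        rw [hS'def, Finset.mem_erase] at hx
        exact lt_of_le_of_ne (hjmax x hx.2) hx.1
      have hS'sub : S' ⊆ Finset.range n' := by
        intro x hx
        have := hS'el x hx
        simp only [Finset.mem_range]
        omega
      have hS'tot : (t+1) * S'.card = n' + 0 := by rw [hS'def, hce]; omega
      have hS'pre : ∀ j' ≤ n', j' ≤ (t+1) * (S' ∩ Finset.range j').card := by
        intro j' hj'
        by_cases h : j' ≤ j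
        · have heq : S' ∩ Finset.range j' = S ∩ Finset.range j' := by
            ext x
            simp only [hS'def, Finset.mem_inter, Finset.mem_erase, Finset.mem_range]
            constructor
            · rintro ⟨⟨_, hx⟩, hlt⟩; exact ⟨hx, hlt⟩
            · rintro ⟨hx, hlt⟩; exact ⟨⟨by omega, hx⟩, hlt⟩
          rw [heq]
          exact hpre j' (by omega)
        · have heq : S' ∩ Finset.range j' = S' := Finset.inter_eq_left.mpr
            (fun x hx => Finset.mem_range.mpr (by have := hS'el x hx; omega))
          rw [heq]
          omega
      have hS'val : S' ∈ valSet t n' 0 := by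
        simp only [valSet, Finset.mem_filter, Finset.mem_powerset]
        exact ⟨hS'sub, hS'pre, hS'tot⟩
      obtain ⟨P', ⟨hP', hopP'⟩, huniq'⟩ := ih n' (by omega) S' hS'val
      have hP'n : IsNCPart t (n - (t+1)) P' := by rw [← hn'def]; exact hP'
      have hop' : ∀ B ∈ P', mn B < j := by
        intro B hB
        apply hS'el
        rw [← hopP']
        exact Finset.mem_image_of_mem _ hB
      have hPbig : IsNCPart t n
          (insert (Finset.Icc j (j+t)) (P'.image (fun B => B.image (eup t j)))) :=
        NC_up hjle hP'n
      have hopPbig : opS (insert (Finset.Icc j (j+t)) (P'.image (fun B => B.image (eup t j))))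
          = S := by
        rw [opS_up hP'n hop', hopP', hS'def, Finset.insert_erase hjS]
      refine ⟨_, ⟨hPbig, hopPbig⟩, ?_⟩
      rintro Q ⟨hQ, hopQ⟩
      have hjop : j ∈ opS Q := by rw [hopQ]; exact hjS
      obtain ⟨Bq, hBq, hmnBq⟩ := Finset.mem_image.mp hjop
      have hmaxq : ∀ B' ∈ Q, mn B' ≤ mn Bq := by
        intro B' hB'
        rw [hmnBq]
        apply hjmax
        rw [← hopQ]
        exact Finset.mem_image_of_mem _ hB'
      have hBqI : Bq = Finset.Icc j (j+t) := by
        have h := max_block_interval hQ hBq hmaxq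
        rw [hmnBq] at h
        exact h
      have hB0Q : Finset.Icc j (j+t) ∈ Q := hBqI ▸ hBq
      have hmnQ : ∀ B ∈ Q.erase (Finset.Icc j (j+t)), mn B < j := by
        intro B hB
        have h1 : mn B ∈ S := by
          rw [← hopQ]
          exact Finset.mem_image_of_mem _ (Finset.mem_of_mem_erase hB)
        have h2 : mn B ≤ j := hjmax _ h1
        have h3 : mn B ≠ j := by
          intro h
          apply Finset.ne_of_mem_erase hB
          apply mn_injOn hQ (Finset.mem_of_mem_erase hB) hB0Q
          rw [h, mn_Icc (by omega)]
        omega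
      have hQ'NC : IsNCPart t n' ((Q.erase (Finset.Icc j (j+t))).image
          (fun B => B.image (edn t j))) := by
        rw [hn'def]
        exact NC_down hQ hB0Q
      have hQ'op : opS ((Q.erase (Finset.Icc j (j+t))).image (fun B => B.image (edn t j)))
          = S' := by
        rw [opS_down hQ hB0Q hmnQ, hopQ, hS'def]
      have hQP : ((Q.erase (Finset.Icc j (j+t))).image (fun B => B.image (edn t j))) = P' :=
        huniq' _ ⟨hQ'NC, hQ'op⟩
      calc Q = insert (Finset.Icc j (j+t))
            (((Q.erase (Finset.Icc j (j+t))).image (fun B => B.image (edn t j))).image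
              (fun B => B.image (eup t j))) := reconstruct hQ hB0Q
        _ = _ := by rw [hQP]

lemma ncard_eq_valSet (t n : ℕ) :
    ({P : Finset (Finset ℕ) | IsNCPart t n P}.ncard) = (valSet t n 0).card := by
  classical
  have hset : {P : Finset (Finset ℕ) | IsNCPart t n P}
      = ↑(((Finset.range n).powerset.powerset).filter (fun P => IsNCPart t n P)) := by
    ext P
    simp only [Set.mem_setOf_eq, Finset.coe_filter, Finset.mem_powerset]
    constructor
    · intro hP
      refine ⟨?_, hP⟩
      intro B hB
      rw [Finset.mem_powerset]
      exact hP.1 B hB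
    · exact fun h => h.2
  rw [hset, Set.ncard_coe_finset]
  apply Finset.card_bij (fun P _ => opS P)
  · intro P hP
    simp only [Finset.mem_filter] at hP
    exact opS_mem_valSet hP.2
  · intro P1 h1 P2 h2 heq
    simp only [Finset.mem_filter] at h1 h2
    obtain ⟨P, _, huniq⟩ := key t n (opS P1) (opS_mem_valSet h1.2)
    rw [huniq P1 ⟨h1.2, rfl⟩, huniq P2 ⟨h2.2, heq.symm⟩]
  · intro S hSmem
    obtain ⟨P, ⟨hP, hop⟩, _⟩ := key t n S hSmem
    refine ⟨P, ?_, hop⟩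
    simp only [Finset.mem_filter, Finset.mem_powerset]
    refine ⟨?_, hP⟩
    intro B hB
    rw [Finset.mem_powerset]
    exact hP.1 B hB

noncomputable def LfunL (t : ℕ) : Polynomial ℚ →ₗ[ℚ] ℚ :=
  Polynomial.lsum (fun i => (ncMoment t i) • LinearMap.id)

lemma Lfun_eq (t : ℕ) (p : Polynomial ℚ) : Lfun t p = LfunL t p := by
  rw [LfunL, Polynomial.lsum_apply, Lfun, Polynomial.sum]
  exact Finset.sum_congr rfl fun i _ => by simp [mul_comm]

lemma Lfun_X_pow (t n : ℕ) : Lfun t (X ^ n) = ncMoment t n := by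
  rw [Lfun_eq, LfunL, Polynomial.lsum_apply, ← Polynomial.monomial_one_right_eq_X_pow,
    Polynomial.sum_monomial_index]
  · simp
  · simp


lemma moment_eq (t : ℕ) (ht : 1 ≤ t) (n : ℕ) : ncMoment t n = (Nt t n 0 : ℚ) := by
  rw [ncMoment, ncard_eq_valSet, valSet_card]

section Analytic
variable (t : ℕ) (ht : 1 ≤ t) (U : ℕ → Polynomial ℚ)
  (hinit : ∀ i ≤ t, U i = X ^ i)
  (hrec : ∀ n, t ≤ n → U (n + 1) = X * U n - U (n - t))

include ht hinit hrec

lemma LUpow : ∀ k, ∀ n, Lfun t (U k * X ^ n) = (Nt t n k : ℚ) := by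
  intro k
  induction k using Nat.strong_induction_on with
  | _ k ih =>
    match k with
    | 0 =>
      intro n
      rw [hinit 0 (by omega), pow_zero, one_mul, Lfun_X_pow, moment_eq t ht]
    | (k+1) =>
      intro n
      by_cases h : t ≤ k
      · have e1 : U (k+1) * X ^ n = U k * X ^ (n+1) - U (k-t) * X ^ n := by
          rw [hrec k h]; ring
        rw [e1, Lfun_eq, map_sub, ← Lfun_eq, ← Lfun_eq,
          ih k (by omega) (n+1), ih (k-t) (by omega) n]
        rw [show Nt t (n+1) k = Nt t n (k+1) + (if t ≤ k then Nt t n (k - t) else 0) from rfl,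
          if_pos h]
        push_cast
        ring
      · have e1 : U (k+1) * X ^ n = U k * X ^ (n+1) := by
          rw [hinit k (by omega), hinit (k+1) (by omega)]; ring
        rw [e1, ih k (by omega) (n+1),
          show Nt t (n+1) k = Nt t n (k+1) + (if t ≤ k then Nt t n (k - t) else 0) from rfl,
          if_neg h]
        norm_num

lemma LUU : ∀ n, ∀ m, n * t ≤ m →
    Lfun t (U m * U n) = if m = n * t then 1 else 0 := by
  intro n
  induction n using Nat.strong_induction_on with
  | _ n ih =>
    intro m hm
    by_cases hn : n ≤ t
    · rw [hinit n hn, LUpow t ht U hinit hrec, Nt_high t ht n m hm]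
      split <;> norm_num
    · push_neg at hn
      obtain ⟨n', rfl⟩ : ∃ n', n = n' + 1 := ⟨n - 1, by omega⟩
      have hn' : t ≤ n' := by omega
      have hmt : t ≤ m := by nlinarith
      have e1 : U m * U (n'+1) =
          U (m+1) * U n' + U (m-t) * U n' - U m * U (n'-t) := by
        rw [hrec n' hn', hrec m hmt]
        ring
      have hmt1 : n' * t ≤ m + 1 := by nlinarith
      have hmt2 : n' * t ≤ m - t := by rw [Nat.succ_mul] at hm; omega
      have hmt3 : (n' - t) * t ≤ m := by nlinarith [Nat.sub_le n' t]
      rw [e1, Lfun_eq, map_sub, map_add, ← Lfun_eq, ← Lfun_eq, ← Lfun_eq,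
        ih n' (by omega) (m+1) hmt1, ih n' (by omega) (m-t) hmt2,
        ih (n'-t) (by omega) m hmt3]
      have c1 : ¬ (m + 1 = n' * t) := by rw [Nat.succ_mul] at hm; omega
      have c2 : (m - t = n' * t) ↔ (m = (n'+1) * t) := by rw [Nat.succ_mul]; omega
      have c3 : ¬ (m = (n' - t) * t) := by nlinarith [Nat.sub_le n' t, Nat.sub_lt (show 0 < n' by omega) (show 0 < t by omega)]
      rw [if_neg c1, if_neg c3]
      simp [c2]

end Analytic

theorem chebyshev2_higher_order_t_orthogonality (t : ℕ) (ht : 1 ≤ t)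
    (U : ℕ → Polynomial ℚ)
    (hinit : ∀ i ≤ t, U i = X ^ i)
    (hrec : ∀ n, t ≤ n → U (n + 1) = X * U n - U (n - t)) :
    (∀ m n : ℕ, n * t < m → Lfun t (U m * U n) = 0) ∧
    (∀ n : ℕ, Lfun t (U (n * t) * U n) = 1) := by
  constructor
  · intro m n hmn
    rw [LUU t ht U hinit hrec n m hmn.le, if_neg (by omega)]
  · intro n
    rw [LUU t ht U hinit hrec n (n*t) le_rfl, if_pos rfl]
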